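/- Subdivision matching: If a system X matches its environment (Y, f), then for any subset Y' ⊆ Y with X' = f(Y'), and any nested partition sequence P of X', C_{X'}^P(n) ≥ C_{Y'}^{P^f}(n) for all scales n. -/
import Mathlib


open scoped BigOperators Classical

namespace Ashby

/-- A probability mass function on a finite sample space. -/
def IsProb {Ω : Type*} [Fintype Ω] (μ : Ω → ℝ) : Prop :=
  (∀ ω, 0 ≤ μ ω) ∧ ∑ ω, μ ω = 1

/-- Probability that the random variable `X` takes the value `a`. -/
noncomputable def prob {Ω α : Type*} [Fintype Ω] (μ : Ω → ℝ) (X : Ω → α) (a : α) : ℝ :=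
  ∑ ω, if X ω = a then μ ω else 0

/-- Shannon entropy of a discrete random variable. -/
noncomputable def H {Ω α : Type*} [Fintype Ω] [Fintype α] (μ : Ω → ℝ) (X : Ω → α) : ℝ :=
  ∑ a, Real.negMulLog (prob μ X a)

/-- Conditional entropy `H(Y|X)`. -/
noncomputable def condH {Ω α β : Type*} [Fintype Ω] [Fintype α] [Fintype β]
    (μ : Ω → ℝ) (Y : Ω → β) (X : Ω → α) : ℝ :=
  H μ (fun ω => (X ω, Y ω)) - H μ X

/-- Mutual information `I(X;Y)`. -/
noncomputable def mutualInfo {Ω α β : Type*} [Fintype Ω] [Fintype α] [Fintype β]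
    (μ : Ω → ℝ) (X : Ω → α) (Y : Ω → β) : ℝ :=
  H μ X + H μ Y - H μ (fun ω => (X ω, Y ω))

/-- Conditional mutual information `I(X;Y|Z)`. -/
noncomputable def condMutualInfo {Ω α β γ : Type*} [Fintype Ω] [Fintype α] [Fintype β] [Fintype γ]
    (μ : Ω → ℝ) (X : Ω → α) (Y : Ω → β) (Z : Ω → γ) : ℝ :=
  condH μ X Z + condH μ Y Z - condH μ (fun ω => (X ω, Y ω)) Z

/-- Entropy of the joint random variable formed by the components of the system `x`
whose indices lie in the part `S`. -/
noncomputable def Hset {Ω α ι : Type*} [Fintype Ω] [Fintype α] [DecidableEq ι]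
    (μ : Ω → ℝ) (x : ι → Ω → α) (S : Finset ι) : ℝ :=
  H μ (fun ω => (fun i : S => x i.1 ω))

/-- A nested partition sequence of the (index set of a) system: for each `n ≥ 1`,
`part n` is a partition of the index set, `part n` refines `part m` whenever `n ≥ m ≥ 1`,
and this refinement is strict whenever `|X| ≥ n > m ≥ 1`. -/
structure NPS (ι : Type*) [Fintype ι] [DecidableEq ι] where
  part : ℕ → Finset (Finset ι)
  partition : ∀ n, 1 ≤ n → (∅ ∉ part n ∧ ∀ i : ι, ∃! χ, χ ∈ part n ∧ i ∈ χ)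
  refines : ∀ m n, 1 ≤ m → m ≤ n → ∀ χ ∈ part n, ∃ χ' ∈ part m, χ ⊆ χ'
  strict : ∀ m n, 1 ≤ m → m < n → n ≤ Fintype.card ι → part n ≠ part m

/-- `S̃_X^P(n) = Σ_{χ ∈ P_n} H(χ)`, with `S̃_X^P(0) = 0`. -/
noncomputable def Stilde {Ω α ι : Type*} [Fintype Ω] [Fintype α] [Fintype ι] [DecidableEq ι]
    (μ : Ω → ℝ) (x : ι → Ω → α) (P : NPS ι) (n : ℕ) : ℝ :=
  if n = 0 then 0 else ∑ χ ∈ P.part n, Hset μ x χ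

/-- The complexity profile `C_X^P(n) = S̃_X^P(n) − S̃_X^P(n−1)`. -/
noncomputable def C {Ω α ι : Type*} [Fintype Ω] [Fintype α] [Fintype ι] [DecidableEq ι]
    (μ : Ω → ℝ) (x : ι → Ω → α) (P : NPS ι) (n : ℕ) : ℝ :=
  Stilde μ x P n - Stilde μ x P (n - 1)

section AuxLemmas

variable {Ω α β γ δ : Type*} [Fintype Ω] [Fintype α] [Fintype β] [Fintype γ] [Fintype δ]
  {μ : Ω → ℝ}

set_option linter.unusedSectionVars false

lemma prob_nonneg (hμ : IsProb μ) (X : Ω → α) (a : α) : 0 ≤ prob μ X a := by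
  apply Finset.sum_nonneg; intro ω _; split <;> simp [hμ.1 ω]

lemma sum_prob (hμ : IsProb μ) (X : Ω → α) : ∑ a, prob μ X a = 1 := by
  simp only [prob]
  rw [Finset.sum_comm, ← hμ.2]
  refine Finset.sum_congr rfl (fun ω _ => ?_)
  simp

lemma sum_ite_of_iff {δ' : Type*} [Fintype δ'] (C : δ' → Prop) (u : δ') (P : Prop) (r : ℝ)
    (h : ∀ d, C d ↔ (d = u ∧ P)) :
    (∑ d, if C d then r else 0) = if P then r else 0 := by
  have key : ∀ d, (if C d then r else 0) = if d = u then (if P then r else 0) else 0 := by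
    intro d
    by_cases h1 : d = u <;> by_cases h2 : P <;> simp_all [h d]
  simp only [key]
  simp

lemma gibbs {ι : Type*} [Fintype ι] (p q : ι → ℝ)
    (hp0 : ∀ i, 0 ≤ p i) (hq0 : ∀ i, 0 ≤ q i)
    (habs : ∀ i, q i = 0 → p i = 0)
    (hq1 : ∑ i, q i ≤ 1) (hp1 : ∑ i, p i = 1) :
    ∑ i, p i * Real.log (q i) ≤ ∑ i, p i * Real.log (p i) := by
  have key : ∀ i, p i * Real.log (q i) - p i * Real.log (p i) ≤ q i - p i := by
    intro i
    rcases eq_or_lt_of_le (hp0 i) with h | h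
    · simpa [← h] using hq0 i
    · have hq : 0 < q i := by
        rcases eq_or_lt_of_le (hq0 i) with h0 | h0
        · exfalso; have := habs i h0.symm; linarith
        · exact h0
      have hlog : Real.log (q i / p i) ≤ q i / p i - 1 :=
        Real.log_le_sub_one_of_pos (by positivity)
      rw [Real.log_div (ne_of_gt hq) (ne_of_gt h)] at hlog
      have h2 := mul_le_mul_of_nonneg_left hlog (le_of_lt h)
      rw [mul_sub, mul_sub, mul_div_cancel₀ _ (ne_of_gt h), mul_one] at h2
      linarith
  have hsum := Finset.sum_le_sum (fun i (_ : i ∈ Finset.univ) => key i)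
  rw [Finset.sum_sub_distrib, Finset.sum_sub_distrib] at hsum
  linarith

lemma H_eq_neg_sum (X : Ω → α) :
    H μ X = -∑ a, prob μ X a * Real.log (prob μ X a) := by
  rw [H, ← Finset.sum_neg_distrib]
  congr 1; funext a; rw [Real.negMulLog]; ring

/-- Submodularity of Shannon entropy. -/
lemma submod (hμ : IsProb μ) (X : Ω → α) (Y : Ω → β) (Z : Ω → γ) :
    H μ (fun ω => (X ω, Y ω, Z ω)) + H μ Z
      ≤ H μ (fun ω => (X ω, Z ω)) + H μ (fun ω => (Y ω, Z ω)) := by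
  set p : α × β × γ → ℝ := prob μ (fun ω => (X ω, Y ω, Z ω)) with hp
  set pXZ : α × γ → ℝ := prob μ (fun ω => (X ω, Z ω)) with hpXZ
  set pYZ : β × γ → ℝ := prob μ (fun ω => (Y ω, Z ω)) with hpYZ
  set pZ : γ → ℝ := prob μ Z with hpZ
  have hp0 : ∀ t, 0 ≤ p t := fun t => prob_nonneg hμ _ t
  have hXZ0 : ∀ t, 0 ≤ pXZ t := fun t => prob_nonneg hμ _ t
  have hYZ0 : ∀ t, 0 ≤ pYZ t := fun t => prob_nonneg hμ _ t
  have hZ0 : ∀ c, 0 ≤ pZ c := fun c => prob_nonneg hμ _ c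
  have hmXZ : ∀ a c, pXZ (a, c) = ∑ b, p (a, b, c) := by
    intro a c
    simp only [hp, hpXZ, prob]
    rw [Finset.sum_comm]
    refine Finset.sum_congr rfl (fun ω _ => ?_)
    exact (sum_ite_of_iff _ (Y ω) ((X ω, Z ω) = (a, c)) (μ ω)
      (by intro d; simp [Prod.ext_iff, eq_comm]; try tauto)).symm
  have hmYZ : ∀ b c, pYZ (b, c) = ∑ a, p (a, b, c) := by
    intro b c
    simp only [hp, hpYZ, prob]
    rw [Finset.sum_comm]
    refine Finset.sum_congr rfl (fun ω _ => ?_)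
    exact (sum_ite_of_iff _ (X ω) ((Y ω, Z ω) = (b, c)) (μ ω)
      (by intro d; simp [Prod.ext_iff, eq_comm]; try tauto)).symm
  have hmZX : ∀ c, pZ c = ∑ a, pXZ (a, c) := by
    intro c
    simp only [hpZ, hpXZ, prob]
    rw [Finset.sum_comm]
    refine Finset.sum_congr rfl (fun ω _ => ?_)
    exact (sum_ite_of_iff _ (X ω) (Z ω = c) (μ ω)
      (by intro d; simp [Prod.ext_iff, eq_comm]; try tauto)).symm
  have hmZY : ∀ c, pZ c = ∑ b, pYZ (b, c) := by
    intro c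
    simp only [hpZ, hpYZ, prob]
    rw [Finset.sum_comm]
    refine Finset.sum_congr rfl (fun ω _ => ?_)
    exact (sum_ite_of_iff _ (Y ω) (Z ω = c) (μ ω)
      (by intro d; simp [Prod.ext_iff, eq_comm]; try tauto)).symm
  have hle_XZ : ∀ t : α × β × γ, p t ≤ pXZ (t.1, t.2.2) := by
    rintro ⟨a, b, c⟩
    rw [hmXZ]
    exact Finset.single_le_sum (fun b _ => hp0 (a, b, c)) (Finset.mem_univ b)
  have hle_YZ : ∀ t : α × β × γ, p t ≤ pYZ (t.2.1, t.2.2) := by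
    rintro ⟨a, b, c⟩
    rw [hmYZ]
    exact Finset.single_le_sum (fun a _ => hp0 (a, b, c)) (Finset.mem_univ a)
  have hle_ZX : ∀ (a : α) (c : γ), pXZ (a, c) ≤ pZ c := by
    intro a c
    rw [hmZX]
    exact Finset.single_le_sum (fun a _ => hXZ0 (a, c)) (Finset.mem_univ a)
  set q : α × β × γ → ℝ :=
    fun t => if pZ t.2.2 = 0 then 0 else pXZ (t.1, t.2.2) * pYZ (t.2.1, t.2.2) / pZ t.2.2 with hq
  have hq0 : ∀ t, 0 ≤ q t := by
    rintro ⟨a, b, c⟩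
    simp only [hq]
    split
    · exact le_refl 0
    · exact div_nonneg (mul_nonneg (hXZ0 _) (hYZ0 _)) (hZ0 _)
  have habs : ∀ t, q t = 0 → p t = 0 := by
    rintro ⟨a, b, c⟩ h
    simp only [hq] at h
    split at h
    · have h1 : pXZ (a, c) ≤ 0 := by
        calc pXZ (a, c) ≤ pZ c := hle_ZX a c
        _ = 0 := by assumption
      have := hle_XZ (a, b, c)
      have := hp0 (a, b, c)
      nlinarith [hXZ0 (a, c)]
    · rename_i hz
      rcases mul_eq_zero.1 ((div_eq_zero_iff.1 h).resolve_right hz) with h' | h'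
      · have := hle_XZ (a, b, c); have := hp0 (a, b, c); simp only at *; linarith
      · have := hle_YZ (a, b, c); have := hp0 (a, b, c); simp only at *; linarith
  have hq1 : ∑ t, q t ≤ 1 := by
    have hstep : ∑ t : α × β × γ, q t = ∑ c, ∑ a, ∑ b, q (a, b, c) := by
      rw [Fintype.sum_prod_type]
      have e1 : ∀ a : α, (∑ y : β × γ, q (a, y)) = ∑ c, ∑ b, q (a, b, c) := by
        intro a; rw [Fintype.sum_prod_type]; exact Finset.sum_comm
      rw [Finset.sum_congr rfl (fun a _ => e1 a)]
      exact Finset.sum_comm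
    rw [hstep]
    have hterm : ∀ c, (∑ a, ∑ b, q (a, b, c)) ≤ pZ c := by
      intro c
      by_cases hz : pZ c = 0
      · simp only [hq]
        simp [hz]
      · have hqv : ∀ a b, q (a, b, c) = pXZ (a, c) * pYZ (b, c) / pZ c := by
          intro a b; simp only [hq, hz, if_neg, ite_false]
        simp only [hqv]
        have e2 : ∀ a, ∑ b, pXZ (a, c) * pYZ (b, c) / pZ c = pXZ (a, c) * pZ c / pZ c := by
          intro a
          rw [← Finset.sum_div, ← Finset.mul_sum, ← hmZY c]
        simp only [e2]
        have e3 : ∀ a, pXZ (a, c) * pZ c / pZ c = pXZ (a, c) := by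
          intro a; field_simp
        simp only [e3]
        rw [← hmZX c]
    calc ∑ c, ∑ a, ∑ b, q (a, b, c) ≤ ∑ c, pZ c := Finset.sum_le_sum (fun c _ => hterm c)
    _ = 1 := sum_prob hμ Z
  have hp1 : ∑ t, p t = 1 := sum_prob hμ _
  have hgibbs := gibbs p q hp0 hq0 habs hq1 hp1
  have hlogq : ∀ t, p t * Real.log (q t)
      = p t * Real.log (pXZ (t.1, t.2.2)) + p t * Real.log (pYZ (t.2.1, t.2.2))
        - p t * Real.log (pZ t.2.2) := by
    rintro ⟨a, b, c⟩
    rcases eq_or_lt_of_le (hp0 (a, b, c)) with h | h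
    · simp [← h]
    · have hxz : 0 < pXZ (a, c) := lt_of_lt_of_le h (hle_XZ (a, b, c))
      have hyz : 0 < pYZ (b, c) := lt_of_lt_of_le h (hle_YZ (a, b, c))
      have hz : 0 < pZ c := lt_of_lt_of_le hxz (hle_ZX a c)
      have hqv : q (a, b, c) = pXZ (a, c) * pYZ (b, c) / pZ c := by
        simp only [hq]; rw [if_neg (ne_of_gt hz)]
      rw [hqv, Real.log_div (by positivity) (ne_of_gt hz),
        Real.log_mul (ne_of_gt hxz) (ne_of_gt hyz)]
      ring
  have hsumlogq : ∑ t, p t * Real.log (q t)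
      = (∑ t : α × β × γ, p t * Real.log (pXZ (t.1, t.2.2)))
        + (∑ t : α × β × γ, p t * Real.log (pYZ (t.2.1, t.2.2)))
        - (∑ t : α × β × γ, p t * Real.log (pZ t.2.2)) := by
    rw [← Finset.sum_add_distrib, ← Finset.sum_sub_distrib]
    exact Finset.sum_congr rfl (fun t _ => hlogq t)
  have hHXYZ : H μ (fun ω => (X ω, Y ω, Z ω)) = -∑ t, p t * Real.log (p t) :=
    H_eq_neg_sum _
  have hHXZ : H μ (fun ω => (X ω, Z ω))
      = -∑ t : α × β × γ, p t * Real.log (pXZ (t.1, t.2.2)) := by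
    rw [H_eq_neg_sum, neg_inj]
    rw [Fintype.sum_prod_type]
    conv_rhs => rw [Fintype.sum_prod_type]
    refine Finset.sum_congr rfl (fun a _ => ?_)
    conv_rhs => rw [Fintype.sum_prod_type, Finset.sum_comm]
    refine Finset.sum_congr rfl (fun c _ => ?_)
    show pXZ (a, c) * Real.log (pXZ (a, c)) = ∑ b, p (a, b, c) * Real.log (pXZ (a, c))
    rw [← Finset.sum_mul, ← hmXZ a c]
  have hHYZ : H μ (fun ω => (Y ω, Z ω))
      = -∑ t : α × β × γ, p t * Real.log (pYZ (t.2.1, t.2.2)) := by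
    rw [H_eq_neg_sum, neg_inj]
    conv_rhs => rw [Fintype.sum_prod_type, Finset.sum_comm]
    refine Finset.sum_congr rfl (fun y _ => ?_)
    obtain ⟨b, c⟩ := y
    show pYZ (b, c) * Real.log (pYZ (b, c)) = ∑ a, p (a, b, c) * Real.log (pYZ (b, c))
    rw [← Finset.sum_mul, ← hmYZ b c]
  have hHZ : H μ Z = -∑ t : α × β × γ, p t * Real.log (pZ t.2.2) := by
    rw [H_eq_neg_sum, neg_inj]
    conv_rhs => rw [Fintype.sum_prod_type, Finset.sum_comm]
    have step1 : ∀ y : β × γ, (∑ a, p (a, y.1, y.2) * Real.log (pZ y.2))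
        = pYZ (y.1, y.2) * Real.log (pZ y.2) := by
      rintro ⟨b, c⟩
      show ∑ a, p (a, b, c) * Real.log (pZ c) = pYZ (b, c) * Real.log (pZ c)
      rw [← Finset.sum_mul, ← hmYZ b c]
    calc ∑ c, pZ c * Real.log (pZ c)
        = ∑ c, ∑ b, pYZ (b, c) * Real.log (pZ c) := by
          refine Finset.sum_congr rfl (fun c _ => ?_)
          rw [← Finset.sum_mul, ← hmZY c]
      _ = ∑ y : β × γ, pYZ (y.1, y.2) * Real.log (pZ y.2) := by
          rw [Fintype.sum_prod_type, Finset.sum_comm]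
      _ = ∑ y : β × γ, ∑ a, p (a, y.1, y.2) * Real.log (pZ y.2) := by
          refine Finset.sum_congr rfl (fun y _ => (step1 y).symm)
      _ = ∑ y : β × γ, ∑ a, p (a, y) * Real.log (pZ (a, y).2.2) := by
          refine Finset.sum_congr rfl (fun y _ => ?_)
          refine Finset.sum_congr rfl (fun a _ => rfl)
  rw [hHXYZ, hHXZ, hHYZ, hHZ]
  rw [hsumlogq] at hgibbs
  linarith

/-- Entropy is invariant under injective relabelings of the value space. -/
lemma H_comp_inj {γ₂ : Type*} [Fintype γ₂] (W : Ω → γ₂) (Z : Ω → γ) (e : γ → γ₂)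
    (he : Function.Injective e) (hW : ∀ ω, W ω = e (Z ω)) : H μ W = H μ Z := by
  have hprob : ∀ a, prob μ W (e a) = prob μ Z a := by
    intro a
    simp only [prob]
    refine Finset.sum_congr rfl fun ω _ => ?_
    simp [hW ω, he.eq_iff]
  have hzero : ∀ b, b ∉ Finset.univ.image e → prob μ W b = 0 := by
    intro b hb
    apply Finset.sum_eq_zero
    intro ω _
    rw [if_neg]
    intro h
    exact hb (by rw [← h, hW ω]; exact Finset.mem_image_of_mem e (Finset.mem_univ _))
  rw [H, ← Finset.sum_subset (Finset.subset_univ (Finset.univ.image e))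
      (fun b _ hb => by rw [hzero b hb, Real.negMulLog_zero])]
  rw [Finset.sum_image (fun a _ a' _ h => he h)]
  exact Finset.sum_congr rfl fun a _ => by rw [hprob a]

lemma H_of_const (hμ : IsProb μ) (X : Ω → α) (c : α) (h : ∀ ω, X ω = c) : H μ X = 0 := by
  have hprob : ∀ a, prob μ X a = if c = a then 1 else 0 := by
    intro a
    simp only [prob, h]
    by_cases hc : c = a
    · simp [hc, hμ.2]
    · simp [hc]
  rw [H]
  apply Finset.sum_eq_zero
  intro a _
  rw [hprob a]
  split <;> simp

lemma H_pair_comm (X : Ω → α) (Y : Ω → β) :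
    H μ (fun ω => (X ω, Y ω)) = H μ (fun ω => (Y ω, X ω)) :=
  H_comp_inj _ _ (fun t => (t.2, t.1))
    (fun t t' h => by simp only [Prod.ext_iff] at h ⊢; tauto) (fun ω => rfl)

lemma H_le_pair (hμ : IsProb μ) (X : Ω → α) (Y : Ω → β) :
    H μ X ≤ H μ (fun ω => (Y ω, X ω)) := by
  have h := submod hμ Y Y X
  have he : H μ (fun ω => (Y ω, Y ω, X ω)) = H μ (fun ω => (Y ω, X ω)) :=
    H_comp_inj _ _ (fun t => (t.1, t.1, t.2))
      (fun t t' h => by simp only [Prod.ext_iff] at h ⊢; tauto) (fun ω => rfl)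
  linarith

lemma condH_nonneg (hμ : IsProb μ) (Y : Ω → β) (X : Ω → α) : 0 ≤ condH μ Y X := by
  have h1 := H_le_pair hμ X Y
  have h2 : H μ (fun ω => (Y ω, X ω)) = H μ (fun ω => (X ω, Y ω)) := H_pair_comm Y X
  rw [condH]
  linarith

lemma condH_comp_inj {α' β' : Type*} [Fintype α'] [Fintype β']
    (U : Ω → α) (U' : Ω → α') (V : Ω → β) (V' : Ω → β') (e : α → α') (f : β → β')
    (he : Function.Injective e) (hf : Function.Injective f)
    (hU : ∀ ω, U' ω = e (U ω)) (hV : ∀ ω, V' ω = f (V ω)) :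
    condH μ U' V' = condH μ U V := by
  have e1 : H μ (fun ω => (V' ω, U' ω)) = H μ (fun ω => (V ω, U ω)) :=
    H_comp_inj _ _ (fun t => (f t.1, e t.2))
      (fun t t' h => by
        simp only [Prod.ext_iff] at *
        exact ⟨hf h.1, he h.2⟩)
      (fun ω => by simp [hU ω, hV ω])
  have e2 : H μ V' = H μ V := H_comp_inj _ _ f hf hV
  rw [condH, condH, e1, e2]

lemma condH_drop (hμ : IsProb μ) (U : Ω → α) (V₁ : Ω → γ) (V₂ : Ω → δ) :
    condH μ U (fun ω => (V₁ ω, V₂ ω)) ≤ condH μ U V₁ := by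
  have hsub := submod hμ U V₂ V₁
  have e1 : H μ (fun ω => ((V₁ ω, V₂ ω), U ω)) = H μ (fun ω => (U ω, V₂ ω, V₁ ω)) :=
    H_comp_inj _ _ (fun t => ((t.2.2, t.2.1), t.1))
      (fun t t' h => by simp only [Prod.ext_iff] at h ⊢; tauto) (fun ω => rfl)
  have e2 : H μ (fun ω => (V₁ ω, V₂ ω)) = H μ (fun ω => (V₂ ω, V₁ ω)) := H_pair_comm _ _
  have e3 : H μ (fun ω => (V₁ ω, U ω)) = H μ (fun ω => (U ω, V₁ ω)) := H_pair_comm _ _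
  rw [condH, condH]
  linarith

lemma condH_drop' (hμ : IsProb μ) (U : Ω → α) (V₁ : Ω → γ) (V₂ : Ω → δ) :
    condH μ U (fun ω => (V₁ ω, V₂ ω)) ≤ condH μ U V₂ := by
  have e0 : condH μ U (fun ω => (V₁ ω, V₂ ω)) = condH μ U (fun ω => (V₂ ω, V₁ ω)) := by
    refine condH_comp_inj _ _ _ _ id (fun t => (t.2, t.1)) (fun _ _ h => h)
      (fun t t' h => by simp only [Prod.ext_iff] at h ⊢; tauto) (fun ω => rfl) (fun ω => rfl)
  rw [e0]
  exact condH_drop hμ U V₂ V₁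

lemma condH_subadd (hμ : IsProb μ) (U₁ : Ω → α) (U₂ : Ω → β) (V : Ω → γ) :
    condH μ (fun ω => (U₁ ω, U₂ ω)) V ≤ condH μ U₁ V + condH μ U₂ V := by
  have hsub := submod hμ U₁ U₂ V
  have e1 : H μ (fun ω => (V ω, U₁ ω, U₂ ω)) = H μ (fun ω => (U₁ ω, U₂ ω, V ω)) :=
    H_comp_inj _ _ (fun t => (t.2.2, t.1, t.2.1))
      (fun t t' h => by simp only [Prod.ext_iff] at h ⊢; tauto) (fun ω => rfl)
  have e2 : H μ (fun ω => (V ω, U₁ ω)) = H μ (fun ω => (U₁ ω, V ω)) := H_pair_comm _ _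
  have e3 : H μ (fun ω => (V ω, U₂ ω)) = H μ (fun ω => (U₂ ω, V ω)) := H_pair_comm _ _
  rw [condH, condH, condH]
  linarith

lemma condH_pair_le (hμ : IsProb μ) (U₁ : Ω → α) (U₂ : Ω → β) (V₁ : Ω → γ) (V₂ : Ω → δ) :
    condH μ (fun ω => (U₁ ω, U₂ ω)) (fun ω => (V₁ ω, V₂ ω))
      ≤ condH μ U₁ V₁ + condH μ U₂ V₂ := by
  have h1 := condH_subadd hμ U₁ U₂ (fun ω => (V₁ ω, V₂ ω))
  have h2 := condH_drop hμ U₁ V₁ V₂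
  have h3 := condH_drop' hμ U₂ V₁ V₂
  linarith

lemma condH_pair_zero (hμ : IsProb μ) (U₁ : Ω → α) (U₂ : Ω → β) (V₁ : Ω → γ) (V₂ : Ω → δ)
    (h1 : condH μ U₁ V₁ = 0) (h2 : condH μ U₂ V₂ = 0) :
    condH μ (fun ω => (U₁ ω, U₂ ω)) (fun ω => (V₁ ω, V₂ ω)) = 0 := by
  have hle := condH_pair_le hμ U₁ U₂ V₁ V₂
  have hge := condH_nonneg hμ (fun ω => (U₁ ω, U₂ ω)) (fun ω => (V₁ ω, V₂ ω))
  linarith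

lemma condH_flip (hμ : IsProb μ) (X : Ω → α) (Y : Ω → β) (hYX : condH μ Y X = 0) :
    condH μ X Y = H μ X - H μ Y := by
  rw [condH] at hYX ⊢
  have e1 : H μ (fun ω => (Y ω, X ω)) = H μ (fun ω => (X ω, Y ω)) := H_pair_comm _ _
  linarith

end AuxLemmas

section AuxLemmas2
variable {ι' : Type*} [DecidableEq ι'] {κ : Type*}

lemma restr_union_inj (A B : Finset ι') :
    Function.Injective (fun g : (↥(A ∪ B) → κ) =>
      ((fun i : ↥A => g ⟨i.1, Finset.mem_union_left B i.2⟩),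
       (fun i : ↥B => g ⟨i.1, Finset.mem_union_right A i.2⟩))) := by
  intro g g' h
  simp only [Prod.mk.injEq] at h
  funext j
  rcases Finset.mem_union.1 j.2 with hj | hj
  · exact congrFun h.1 ⟨j.1, hj⟩
  · exact congrFun h.2 ⟨j.1, hj⟩

lemma restr_insert_inj (a : ι') (s : Finset ι') :
    Function.Injective (fun g : (↥(insert a s) → κ) =>
      (g ⟨a, Finset.mem_insert_self a s⟩,
       (fun i : ↥s => g ⟨i.1, Finset.mem_insert_of_mem i.2⟩))) := by
  intro g g' h
  simp only [Prod.mk.injEq] at h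
  funext j
  rcases Finset.mem_insert.1 j.2 with hj | hj
  · have hj' : j = ⟨a, Finset.mem_insert_self a s⟩ := Subtype.ext hj
    rw [hj']; exact h.1
  · exact congrFun h.2 ⟨j.1, hj⟩

end AuxLemmas2

/-- Subdivision matching: if `x` matches its environment `y`, then for any subset `S`
of the components and any nested partition sequence `P` of the subsystem, the subsystem's
complexity dominates that of the corresponding environmental subsystem at every scale. -/

theorem subdivision_matching {Ω α β ι : Type*} [Fintype Ω] [Fintype α] [Fintype β]
    [Fintype ι] [DecidableEq ι]
    (μ : Ω → ℝ) (hμ : IsProb μ)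
    (x : ι → Ω → α) (y : ι → Ω → β)
    (hmatch : ∀ i, condH μ (y i) (x i) = 0)
    (S : Finset ι) (P : NPS ↥S) :
    ∀ n, 1 ≤ n → C μ (fun i : ↥S => y i.1) P n ≤ C μ (fun i : ↥S => x i.1) P n := by
  classical
  -- empty parts give zero conditional entropies
  have hconstH : ∀ (χ : Finset ↥S), (∀ i : ↥S, i ∉ χ) →
      (condH μ (fun ω => fun i : ↥(χ) => y i.1.1 ω) (fun ω => fun i : ↥(χ) => x i.1.1 ω) = 0 ∧ condH μ (fun ω => fun i : ↥(χ) => x i.1.1 ω) (fun ω => fun i : ↥(χ) => y i.1.1 ω) = 0) := by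
    intro χ h
    have cx : ↥χ → α := fun i => (h i.1 i.2).elim
    have cy : ↥χ → β := fun i => (h i.1 i.2).elim
    have hcx : ∀ ω, (fun i : ↥χ => x i.1.1 ω) = cx := by
      intro ω; funext i; exact (h i.1 i.2).elim
    have hcy : ∀ ω, (fun i : ↥χ => y i.1.1 ω) = cy := by
      intro ω; funext i; exact (h i.1 i.2).elim
    constructor
    · simp only [condH]
      rw [H_of_const hμ _ (cx, cy) (fun ω => by rw [Prod.mk.injEq]; exact ⟨hcx ω, hcy ω⟩),
        H_of_const hμ _ cx hcx]
      ring
    · simp only [condH]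
      rw [H_of_const hμ _ (cy, cx) (fun ω => by rw [Prod.mk.injEq]; exact ⟨hcy ω, hcx ω⟩),
        H_of_const hμ _ cy hcy]
      ring
  -- matching propagates to all parts
  have hmatchχ : ∀ χ : Finset ↥S, condH μ (fun ω => fun i : ↥(χ) => y i.1.1 ω) (fun ω => fun i : ↥(χ) => x i.1.1 ω) = 0 := by
    intro χ
    induction χ using Finset.induction_on with
    | empty => exact (hconstH ∅ (fun i => Finset.notMem_empty i)).1
    | @insert a s ha ih =>
        have key : condH μ (fun ω => (y a.1 ω, fun i : ↥s => y i.1.1 ω))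
            (fun ω => (x a.1 ω, fun i : ↥s => x i.1.1 ω)) = 0 :=
          condH_pair_zero hμ _ _ _ _ (hmatch a.1) ih
        have e := condH_comp_inj (μ := μ)
          (fun ω => fun i : ↥(insert a s) => y i.1.1 ω)
          (fun ω => (y a.1 ω, fun i : ↥s => y i.1.1 ω))
          (fun ω => fun i : ↥(insert a s) => x i.1.1 ω)
          (fun ω => (x a.1 ω, fun i : ↥s => x i.1.1 ω))
          (fun g => (g ⟨a, Finset.mem_insert_self a s⟩,
            fun i : ↥s => g ⟨i.1, Finset.mem_insert_of_mem i.2⟩))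
          (fun g => (g ⟨a, Finset.mem_insert_self a s⟩,
            fun i : ↥s => g ⟨i.1, Finset.mem_insert_of_mem i.2⟩))
          (restr_insert_inj a s) (restr_insert_inj a s)
          (fun ω => rfl) (fun ω => rfl)
        exact e.symm.trans key
  -- entropy gap on a part
  have hD : ∀ χ : Finset ↥S,
      Hset μ (fun i : ↥S => x i.1) χ - Hset μ (fun i : ↥S => y i.1) χ
        = condH μ (fun ω => fun i : ↥(χ) => x i.1.1 ω) (fun ω => fun i : ↥(χ) => y i.1.1 ω) := by
    intro χ
    have h := condH_flip hμ (fun ω => fun i : ↥(χ) => x i.1.1 ω) (fun ω => fun i : ↥(χ) => y i.1.1 ω) (hmatchχ χ)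
    rw [show Hset μ (fun i : ↥S => x i.1) χ = H μ (fun ω => fun i : ↥(χ) => x i.1.1 ω) from rfl,
        show Hset μ (fun i : ↥S => y i.1) χ = H μ (fun ω => fun i : ↥(χ) => y i.1.1 ω) from rfl, h]
  have hcongr : ∀ {χ χ' : Finset ↥S}, χ = χ' →
      condH μ (fun ω => fun i : ↥(χ) => x i.1.1 ω) (fun ω => fun i : ↥(χ) => y i.1.1 ω) = condH μ (fun ω => fun i : ↥(χ') => x i.1.1 ω) (fun ω => fun i : ↥(χ') => y i.1.1 ω) := by
    rintro χ _ rfl; rfl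
  have hnn : ∀ χ : Finset ↥S, 0 ≤ condH μ (fun ω => fun i : ↥(χ) => x i.1.1 ω) (fun ω => fun i : ↥(χ) => y i.1.1 ω) :=
    fun χ => condH_nonneg hμ _ _
  -- subadditivity over unions
  have hsubU : ∀ A B : Finset ↥S,
      condH μ (fun ω => fun i : ↥(A ∪ B) => x i.1.1 ω) (fun ω => fun i : ↥(A ∪ B) => y i.1.1 ω)
        ≤ condH μ (fun ω => fun i : ↥(A) => x i.1.1 ω) (fun ω => fun i : ↥(A) => y i.1.1 ω) + condH μ (fun ω => fun i : ↥(B) => x i.1.1 ω) (fun ω => fun i : ↥(B) => y i.1.1 ω) := by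
    intro A B
    have e := condH_comp_inj (μ := μ)
      (fun ω => fun i : ↥(A ∪ B) => x i.1.1 ω)
      (fun ω => ((fun i : ↥A => x i.1.1 ω), (fun i : ↥B => x i.1.1 ω)))
      (fun ω => fun i : ↥(A ∪ B) => y i.1.1 ω)
      (fun ω => ((fun i : ↥A => y i.1.1 ω), (fun i : ↥B => y i.1.1 ω)))
      (fun g => ((fun i : ↥A => g ⟨i.1, Finset.mem_union_left B i.2⟩),
        (fun i : ↥B => g ⟨i.1, Finset.mem_union_right A i.2⟩)))
      (fun g => ((fun i : ↥A => g ⟨i.1, Finset.mem_union_left B i.2⟩),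
        (fun i : ↥B => g ⟨i.1, Finset.mem_union_right A i.2⟩)))
      (restr_union_inj A B) (restr_union_inj A B)
      (fun ω => rfl) (fun ω => rfl)
    rw [← e]
    exact condH_pair_le hμ _ _ _ _
  -- superadditivity of the gap over families of parts
  have hbiU : ∀ T : Finset (Finset ↥S),
      condH μ (fun ω => fun i : ↥(T.biUnion id) => x i.1.1 ω) (fun ω => fun i : ↥(T.biUnion id) => y i.1.1 ω)
        ≤ ∑ χ ∈ T, condH μ (fun ω => fun i : ↥(χ) => x i.1.1 ω) (fun ω => fun i : ↥(χ) => y i.1.1 ω) := by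
    intro T
    induction T using Finset.induction_on with
    | empty =>
        rw [Finset.sum_empty]
        have h0 := (hconstH ((∅ : Finset (Finset ↥S)).biUnion id)
          (fun i hi => by simp at hi)).2
        rw [h0]
    | @insert χ T hχT ih =>
        rw [Finset.sum_insert hχT,
          hcongr (show ((insert χ T).biUnion id) = χ ∪ T.biUnion id by
            rw [Finset.biUnion_insert]; rfl)]
        calc condH μ (fun ω => fun i : ↥(χ ∪ T.biUnion id) => x i.1.1 ω) (fun ω => fun i : ↥(χ ∪ T.biUnion id) => y i.1.1 ω)
            ≤ condH μ (fun ω => fun i : ↥(χ) => x i.1.1 ω) (fun ω => fun i : ↥(χ) => y i.1.1 ω) + condH μ (fun ω => fun i : ↥(T.biUnion id) => x i.1.1 ω) (fun ω => fun i : ↥(T.biUnion id) => y i.1.1 ω) := hsubU χ (T.biUnion id)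
          _ ≤ condH μ (fun ω => fun i : ↥(χ) => x i.1.1 ω) (fun ω => fun i : ↥(χ) => y i.1.1 ω) + ∑ χ ∈ T, condH μ (fun ω => fun i : ↥(χ) => x i.1.1 ω) (fun ω => fun i : ↥(χ) => y i.1.1 ω) := by linarith
  -- gap identity for Stilde
  have hGap : ∀ k, 1 ≤ k →
      Stilde μ (fun i : ↥S => x i.1) P k - Stilde μ (fun i : ↥S => y i.1) P k
        = ∑ χ ∈ P.part k, condH μ (fun ω => fun i : ↥(χ) => x i.1.1 ω) (fun ω => fun i : ↥(χ) => y i.1.1 ω) := by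
    intro k hk
    have hk0 : ¬ (k = 0) := by omega
    simp only [Stilde, if_neg hk0]
    rw [← Finset.sum_sub_distrib]
    exact Finset.sum_congr rfl fun χ _ => hD χ
  have hST0x : Stilde μ (fun i : ↥S => x i.1) P 0 = 0 := by simp [Stilde]
  have hST0y : Stilde μ (fun i : ↥S => y i.1) P 0 = 0 := by simp [Stilde]
  intro n hn
  rcases Nat.lt_or_ge n 2 with h2 | h2
  · obtain rfl : n = 1 := by omega
    have h1 := hGap 1 le_rfl
    have hpos : 0 ≤ ∑ χ ∈ P.part 1, condH μ (fun ω => fun i : ↥(χ) => x i.1.1 ω) (fun ω => fun i : ↥(χ) => y i.1.1 ω) :=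
      Finset.sum_nonneg fun χ _ => hnn χ
    have hcx : C μ (fun i : ↥S => x i.1) P 1
        = Stilde μ (fun i : ↥S => x i.1) P 1 - Stilde μ (fun i : ↥S => x i.1) P 0 := rfl
    have hcy : C μ (fun i : ↥S => y i.1) P 1
        = Stilde μ (fun i : ↥S => y i.1) P 1 - Stilde μ (fun i : ↥S => y i.1) P 0 := rfl
    rw [hcx, hcy, hST0x, hST0y]
    linarith
  · set m := n - 1 with hm
    have hm1 : 1 ≤ m := by omega
    have hmn : m ≤ n := by omega
    have href := P.refines m n hm1 hmn
    choose! par hpar1 hpar2 using href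
    have hkey : ∀ χ' ∈ P.part m,
        ((P.part n).filter (fun χ => par χ = χ')).biUnion id = χ' := by
      intro χ' hχ'
      apply Finset.Subset.antisymm
      · intro i hi
        obtain ⟨χ, hχf, hiχ⟩ := Finset.mem_biUnion.1 hi
        obtain ⟨hχn, hparχ⟩ := Finset.mem_filter.1 hχf
        exact hparχ ▸ hpar2 χ hχn hiχ
      · intro i hi
        obtain ⟨χ, ⟨hχn, hiχ⟩, -⟩ := (P.partition n (by omega)).2 i
        have hip : i ∈ par χ := hpar2 χ hχn hiχ
        obtain ⟨χ₀, hχ₀, hun⟩ := (P.partition m hm1).2 i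
        have e1 : par χ = χ₀ := hun _ ⟨hpar1 χ hχn, hip⟩
        have e2 : χ' = χ₀ := hun _ ⟨hχ', hi⟩
        exact Finset.mem_biUnion.2 ⟨χ, Finset.mem_filter.2 ⟨hχn, by rw [e1, ← e2]⟩, hiχ⟩
    have hfib : (∑ χ' ∈ P.part m, ∑ χ ∈ (P.part n).filter (fun χ => par χ = χ'),
          condH μ (fun ω => fun i : ↥(χ) => x i.1.1 ω) (fun ω => fun i : ↥(χ) => y i.1.1 ω))
        = ∑ χ ∈ P.part n, condH μ (fun ω => fun i : ↥(χ) => x i.1.1 ω) (fun ω => fun i : ↥(χ) => y i.1.1 ω) :=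
      Finset.sum_fiberwise_of_maps_to (fun χ hχ => hpar1 χ hχ) _
    have hperfiber : ∀ χ' ∈ P.part m, condH μ (fun ω => fun i : ↥(χ') => x i.1.1 ω) (fun ω => fun i : ↥(χ') => y i.1.1 ω)
        ≤ ∑ χ ∈ (P.part n).filter (fun χ => par χ = χ'), condH μ (fun ω => fun i : ↥(χ) => x i.1.1 ω) (fun ω => fun i : ↥(χ) => y i.1.1 ω) := by
      intro χ' hχ'
      have h := hbiU ((P.part n).filter (fun χ => par χ = χ'))
      rwa [hcongr (hkey χ' hχ')] at h
    have hsum := Finset.sum_le_sum hperfiber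
    have hgm := hGap m hm1
    have hgn := hGap n (by omega)
    have hcx : C μ (fun i : ↥S => x i.1) P n
        = Stilde μ (fun i : ↥S => x i.1) P n - Stilde μ (fun i : ↥S => x i.1) P m := rfl
    have hcy : C μ (fun i : ↥S => y i.1) P n
        = Stilde μ (fun i : ↥S => y i.1) P n - Stilde μ (fun i : ↥S => y i.1) P m := rfl
    rw [hcx, hcy]
    rw [hfib] at hsum
    linarith

end Ashby
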